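/- Two distinct infinite words x = i₁i₂… and y = j₁j₂… in {1,2,3}^ℕ have the same image under the standard projection π onto the Sierpiński gasket if and only if there exist m ≥ 0 and distinct letters k, l ∈ {1,2,3} such that i_s = j_s for all s ≤ m, and the tail of x after position m equals l followed by k repeated infinitely, while the tail of y after position m equals k followed by l repeated infinitely. -/

import Mathlib

noncomputable def sierpVertex : Fin 3 → ℝ × ℝ
  | 0 => (1/2, Real.sqrt 3 / 2)
  | 1 => (0, 0)
  | 2 => (1, 0)

noncomputable def sierpMap (i : Fin 3) (x : ℝ × ℝ) : ℝ × ℝ :=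
  ((x.1 + (sierpVertex i).1) / 2, (x.2 + (sierpVertex i).2) / 2)

/-- `S_{x 0} ∘ S_{x 1} ∘ ⋯ ∘ S_{x (n-1)}` applied to `x₀`. -/
noncomputable def sierpApprox (x : ℕ → Fin 3) (n : ℕ) (x₀ : ℝ × ℝ) : ℝ × ℝ :=
  (List.range n).foldr (fun k acc => sierpMap (x k) acc) x₀

/-!
The projection is `π x = ∑ᵢ wᵢ(x) • vᵢ`, where `wᵢ(x) = ∑ₖ [xₖ = i] / 2^(k+1)` are barycentric
weights summing to `1`. Since the vertices are affinely independent, `π x = π y` says that the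
three binary expansions `wᵢ(x)` and `wᵢ(y)` agree. If `x` and `y` first differ at `m`, the
expansions of `w_{x m}` differ there by the digits `1` and `0`, which forces all later digits
to be `0` and `1` respectively: `y` is constantly `x m` after `m`, and symmetrically `x` is
constantly `y m`.
-/

lemma hasSum_inv_two_pow_tail (m : ℕ) :
    HasSum (fun k : ℕ => 1 / 2 ^ (k + (m + 1) + 1)) (1 / 2 ^ (m + 1) : ℝ) := by
  convert hasSum_geometric_two' (1 / 2 ^ (m + 1) : ℝ) using 2 with k
  rw [pow_add, pow_add, pow_add]
  field_simp

section BinaryExpansion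

variable {d : ℕ → ℝ} {m : ℕ}

lemma hasSum_zero_iff_hasSum_tail (hpre : ∀ k < m, d k = 0) :
    HasSum (fun k => d k / 2 ^ (k + 1)) 0 ↔
      HasSum (fun k => d (k + (m + 1)) / 2 ^ (k + (m + 1) + 1)) (-(d m / 2 ^ (m + 1))) := by
  have head : ∑ k ∈ Finset.range (m + 1), d k / 2 ^ (k + 1) = d m / 2 ^ (m + 1) := by
    rw [Finset.sum_range_succ, Finset.sum_eq_zero fun k hk => by
      rw [hpre k (Finset.mem_range.mp hk), zero_div], zero_add]
  rw [← hasSum_nat_add_iff' (m + 1), head, zero_sub]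

lemma hasSum_zero_of_tail_eq_neg (hpre : ∀ k < m, d k = 0) (htail : ∀ k, m < k → d k = -d m) :
    HasSum (fun k => d k / 2 ^ (k + 1)) 0 := by
  have hterms : (fun k => d (k + (m + 1)) / 2 ^ (k + (m + 1) + 1)) =
      fun k => -d m * (1 / 2 ^ (k + (m + 1) + 1)) :=
    funext fun k => by rw [htail _ (by omega)]; ring
  rw [hasSum_zero_iff_hasSum_tail hpre, hterms, ← neg_div, ← mul_one_div]
  exact (hasSum_inv_two_pow_tail m).mul_left (-d m)

/-- The tail after `m` must contribute `-1 / 2 ^ (m + 1)`, the least value digits `≥ -1` allow. -/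
lemma tail_eq_neg_one_of_hasSum_zero (hd : ∀ k, -1 ≤ d k) (hpre : ∀ k < m, d k = 0)
    (hm : d m = 1) (h : HasSum (fun k => d k / 2 ^ (k + 1)) 0) :
    ∀ k, m < k → d k = -1 := by
  rw [hasSum_zero_iff_hasSum_tail hpre, hm] at h
  have hzero := h.add (hasSum_inv_two_pow_tail m)
  rw [neg_add_cancel, hasSum_zero_iff_of_nonneg] at hzero
  · intro k hk
    have := congrFun hzero (k - (m + 1))
    rw [show k - (m + 1) + (m + 1) = k by omega] at this
    simp only [Pi.zero_apply] at this
    field_simp at this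
    linarith
  · intro k
    rw [← add_div]
    exact div_nonneg (by linarith [hd (k + (m + 1))]) (by positivity)

end BinaryExpansion

lemma sierpApprox_succ (x : ℕ → Fin 3) (n : ℕ) (p : ℝ × ℝ) :
    sierpApprox x (n + 1) p = sierpApprox x n (sierpMap (x n) p) := by
  simp only [sierpApprox, List.range_succ, List.foldr_append, List.foldr_cons, List.foldr_nil]

lemma sierpMap_eq_smul (i : Fin 3) (p : ℝ × ℝ) :
    sierpMap i p = (1 / 2 : ℝ) • p + (1 / 2 : ℝ) • sierpVertex i := by
  ext <;> simp [sierpMap] <;> ring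

lemma sierpApprox_eq (x : ℕ → Fin 3) (n : ℕ) (p : ℝ × ℝ) :
    sierpApprox x n p =
      (1 / 2 ^ n : ℝ) • p + ∑ k ∈ Finset.range n, (1 / 2 ^ (k + 1) : ℝ) • sierpVertex (x k) := by
  induction n generalizing p with
  | zero => simp [sierpApprox]
  | succ n ih =>
    rw [sierpApprox_succ, ih, sierpMap_eq_smul, Finset.sum_range_succ, smul_add, smul_smul,
      smul_smul]
    rw [show (1 / 2 ^ n : ℝ) * (1 / 2) = 1 / 2 ^ (n + 1) by ring]
    abel

def sierpDigit (x : ℕ → Fin 3) (i : Fin 3) (k : ℕ) : ℝ := if x k = i then 1 else 0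

noncomputable def sierpWeight (x : ℕ → Fin 3) (i : Fin 3) : ℝ :=
  ∑' k, sierpDigit x i k / 2 ^ (k + 1)

lemma hasSum_sierpWeight (x : ℕ → Fin 3) (i : Fin 3) :
    HasSum (fun k => sierpDigit x i k / 2 ^ (k + 1)) (sierpWeight x i) := by
  refine Summable.hasSum (Summable.of_nonneg_of_le (fun k => ?_) (fun k => ?_)
    (hasSum_geometric_two' 1).summable)
  · unfold sierpDigit; split_ifs <;> positivity
  · rw [div_div, ← pow_succ']
    unfold sierpDigit; split_ifs <;> simp

lemma sierpVertex_eq_sum_digit (x : ℕ → Fin 3) (k : ℕ) :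
    sierpVertex (x k) = ∑ i, sierpDigit x i k • sierpVertex i := by
  simp [sierpDigit]

lemma eq_sum_sierpWeight_smul (π : (ℕ → Fin 3) → ℝ × ℝ)
    (hπ : ∀ (x : ℕ → Fin 3) (x₀ : ℝ × ℝ),
      Filter.Tendsto (fun n => sierpApprox x n x₀) Filter.atTop (nhds (π x)))
    (x : ℕ → Fin 3) : π x = ∑ i, sierpWeight x i • sierpVertex i := by
  have hsum : HasSum (fun k => (1 / 2 ^ (k + 1) : ℝ) • sierpVertex (x k))
      (∑ i, sierpWeight x i • sierpVertex i) := by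
    have := hasSum_sum fun i (_ : i ∈ Finset.univ) =>
      (hasSum_sierpWeight x i).smul_const (sierpVertex i)
    convert this using 2 with k
    rw [sierpVertex_eq_sum_digit, Finset.smul_sum]
    simp only [smul_smul]
    exact Finset.sum_congr rfl fun i _ => by rw [one_div_mul_eq_div]
  refine tendsto_nhds_unique (hπ x 0) ?_
  simpa [sierpApprox_eq] using hsum.tendsto_sum_nat

lemma sum_sierpWeight (x : ℕ → Fin 3) : ∑ i, sierpWeight x i = 1 := by
  have := hasSum_sum fun i (_ : i ∈ Finset.univ) => hasSum_sierpWeight x i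
  refine this.unique ?_
  convert hasSum_geometric_two' 1 using 2 with k
  simp [sierpDigit, ← Finset.sum_div]
  ring

lemma sum_smul_sierpVertex_injective {a b : Fin 3 → ℝ} (ha : ∑ i, a i = 1) (hb : ∑ i, b i = 1)
    (h : ∑ i, a i • sierpVertex i = ∑ i, b i • sierpVertex i) : a = b := by
  simp only [Fin.sum_univ_three] at ha hb h
  simp only [sierpVertex, Prod.ext_iff, Prod.fst_add, Prod.snd_add, Prod.smul_mk, smul_eq_mul] at h
  have h0 : a 0 = b 0 := mul_right_cancel₀ (b := √3 / 2) (by positivity) (by linarith)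
  ext i
  fin_cases i <;> simp <;> linarith

lemma sierpWeight_eq_iff_hasSum_zero (x y : ℕ → Fin 3) (i : Fin 3) :
    sierpWeight x i = sierpWeight y i ↔
      HasSum (fun k => (sierpDigit x i k - sierpDigit y i k) / 2 ^ (k + 1)) 0 := by
  have hsub := (hasSum_sierpWeight x i).sub (hasSum_sierpWeight y i)
  simp only [← sub_div] at hsub
  refine ⟨fun h => ?_, fun h => sub_eq_zero.mp (hsub.unique h)⟩
  rwa [h, sub_self] at hsub

lemma sierpWeight_eq_of_swap {x y : ℕ → Fin 3} {m : ℕ} {k l : Fin 3}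
    (hpre : ∀ s, s < m → x s = y s) (hxm : x m = l) (hxt : ∀ s, m < s → x s = k)
    (hym : y m = k) (hyt : ∀ s, m < s → y s = l) : sierpWeight x = sierpWeight y := by
  ext i
  rw [sierpWeight_eq_iff_hasSum_zero]
  refine hasSum_zero_of_tail_eq_neg (m := m) (fun s hs => by simp [sierpDigit, hpre s hs])
    fun s hs => ?_
  simp only [sierpDigit, hxt s hs, hyt s hs, hxm, hym]
  ring

lemma tail_eq_of_sierpWeight_eq {x y : ℕ → Fin 3} {m : ℕ} (hw : sierpWeight x = sierpWeight y)
    (hpre : ∀ s, s < m → x s = y s) (hm : x m ≠ y m) : ∀ s, m < s → y s = x m := by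
  have hd := tail_eq_neg_one_of_hasSum_zero (m := m)
    (fun s => by unfold sierpDigit; split_ifs <;> norm_num)
    (fun s hs => by simp [sierpDigit, hpre s hs])
    (by simp [sierpDigit, Ne.symm hm])
    ((sierpWeight_eq_iff_hasSum_zero x y (x m)).mp (congrFun hw (x m)))
  intro s hs
  by_contra hys
  have := hd s hs
  simp only [sierpDigit, if_neg hys, sub_zero] at this
  split_ifs at this <;> norm_num at this

theorem stmt_18 (π : (ℕ → Fin 3) → ℝ × ℝ)
    (hπ : ∀ (x : ℕ → Fin 3) (x₀ : ℝ × ℝ),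
      Filter.Tendsto (fun n => sierpApprox x n x₀) Filter.atTop (nhds (π x)))
    (x y : ℕ → Fin 3) (hxy : x ≠ y) :
    π x = π y ↔ ∃ (m : ℕ) (k l : Fin 3), k ≠ l ∧
      (∀ s, s < m → x s = y s) ∧
      (x m = l ∧ ∀ s, m < s → x s = k) ∧
      (y m = k ∧ ∀ s, m < s → y s = l) := by
  rw [eq_sum_sierpWeight_smul π hπ x, eq_sum_sierpWeight_smul π hπ y]
  constructor
  · intro h
    have hw := sum_smul_sierpVertex_injective (sum_sierpWeight x) (sum_sierpWeight y) h
    have hdiff : ∃ n, x n ≠ y n := Function.ne_iff.mp hxy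
    set m := Nat.find hdiff
    have hpre : ∀ s, s < m → x s = y s := fun s hs => not_not.mp (Nat.find_min hdiff hs)
    have hm : x m ≠ y m := Nat.find_spec hdiff
    exact ⟨m, y m, x m, hm.symm, hpre,
      ⟨rfl, tail_eq_of_sierpWeight_eq hw.symm (fun s hs => (hpre s hs).symm) hm.symm⟩,
      ⟨rfl, tail_eq_of_sierpWeight_eq hw hpre hm⟩⟩
  · rintro ⟨m, k, l, -, hpre, ⟨hxm, hxt⟩, hym, hyt⟩
    rw [sierpWeight_eq_of_swap hpre hxm hxt hym hyt]
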